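/- The arithmetic degree map deg♯ : Pic♯(Spec ℤ) → ℂ/πiℤ is a group isomorphism, where Pic♯(Spec ℤ) is the group of isomorphism classes of pairs (L, L^c) of rank-one ℤ-modules together with a logarithm LOG on the complex line L⊗ℂ ⊗ L^c⊗ℂ, and deg♯(L, L^c, LOG) = −LOG(ℓ ⊗ ℓ^c) mod πiℤ for any choice of ℤ-bases ℓ of L and ℓ^c of L^c. -/

import Mathlib

open Complex TensorProduct

/-- The subgroup `2πiℤ` of `ℂ`. -/
noncomputable def twoPiI : AddSubgroup ℂ := AddSubgroup.zmultiples (2 * Real.pi * Complex.I)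

/-- The subgroup `πiℤ` of `ℂ`. -/
noncomputable def piI : AddSubgroup ℂ := AddSubgroup.zmultiples (Real.pi * Complex.I)

abbrev CModTwoPiI := ℂ ⧸ twoPiI
abbrev CModPiI := ℂ ⧸ piI

lemma twoPiI_le_piI : twoPiI ≤ piI := by
  intro x hx
  obtain ⟨n, hn⟩ := AddSubgroup.mem_zmultiples_iff.mp hx
  refine AddSubgroup.mem_zmultiples_iff.mpr ⟨2 * n, ?_⟩
  rw [← hn]; simp only [zsmul_eq_mul]; push_cast; ring

/-- The canonical reduction `ℂ/2πiℤ → ℂ/πiℤ`. -/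
noncomputable def reduceModPiI : CModTwoPiI →+ CModPiI :=
  QuotientAddGroup.map twoPiI piI (AddMonoidHom.id ℂ) twoPiI_le_piI

/-- The complex logarithm, viewed modulo `2πiℤ`. -/
noncomputable def qlog (z : ℂ) : CModTwoPiI := QuotientAddGroup.mk (Complex.log z)

/-- A logarithm on a complex vector space. -/
def IsLogarithm {V : Type*} [AddCommGroup V] [Module ℂ V]
    (LOG : {e : V // e ≠ 0} → CModTwoPiI) : Prop :=
  ∀ (l : ℂˣ) (e : {e : V // e ≠ 0}),
    LOG ⟨(l : ℂ) • e.1, smul_ne_zero l.ne_zero e.2⟩ = qlog (l : ℂ) + LOG e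

/-- The complexification `ℂ ⊗_ℤ L` of an abelian group `L`. -/
abbrev Cxt (L : Type) [AddCommGroup L] : Type := TensorProduct ℤ ℂ L

/-- The complex line `(L ⊗ ℂ) ⊗_ℂ (L^c ⊗ ℂ)` attached to a pair of rank-one ℤ-modules. -/
abbrev Line (L Lc : Type) [AddCommGroup L] [AddCommGroup Lc] : Type :=
  TensorProduct ℂ (Cxt L) (Cxt Lc)

/-- A conjugate pair of line bundles with logarithm over `Spec ℤ`: two projective
(equivalently free) rank-one ℤ-modules `L`, `L^c` together with a logarithm on the
complex line `Lℂ ⊗ L^cℂ`. -/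
structure ConjPairZ where
  L : Type
  Lc : Type
  [grpL : AddCommGroup L]
  [grpLc : AddCommGroup Lc]
  [freeL : Module.Free ℤ L]
  [freeLc : Module.Free ℤ Lc]
  rankL : Module.finrank ℤ L = 1
  rankLc : Module.finrank ℤ Lc = 1
  LOG : {v : Line L Lc // v ≠ 0} → CModTwoPiI
  isLog : IsLogarithm LOG

attribute [instance] ConjPairZ.grpL ConjPairZ.grpLc ConjPairZ.freeL ConjPairZ.freeLc

/-- The ℂ-linear isomorphism of lines induced by ℤ-linear isomorphisms of the factors. -/
noncomputable def mapLine {L L' Lc Lc' : Type}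
    [AddCommGroup L] [AddCommGroup L'] [AddCommGroup Lc] [AddCommGroup Lc']
    (φ : L ≃ₗ[ℤ] L') (ψ : Lc ≃ₗ[ℤ] Lc') : Line L Lc ≃ₗ[ℂ] Line L' Lc' :=
  TensorProduct.congr (LinearEquiv.baseChange ℤ ℂ _ _ φ) (LinearEquiv.baseChange ℤ ℂ _ _ ψ)

/-- An isomorphism of conjugate pairs over `Spec ℤ`: ℤ-linear isomorphisms of both
underlying modules whose induced map on the complex lines preserves the logarithms. -/
structure PairIso (P Q : ConjPairZ) where
  φ : P.L ≃ₗ[ℤ] Q.L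
  ψ : P.Lc ≃ₗ[ℤ] Q.Lc
  compat : ∀ v : {v : Line P.L P.Lc // v ≠ 0},
    Q.LOG ⟨mapLine φ ψ v.1, (mapLine φ ψ).map_ne_zero_iff.mpr v.2⟩ = P.LOG v


/-! Every vector of the line `Lℂ ⊗ L^cℂ` is a complex multiple of `ℓ ⊗ ℓ^c`, so the equivariance
of `LOG` determines it from its value at `ℓ ⊗ ℓ^c`, an arbitrary element of `ℂ/2πiℤ`. Changing the
bases changes `ℓ ⊗ ℓ^c` by a sign and hence `LOG(ℓ ⊗ ℓ^c)` by `log(±1) ∈ {0, πi}`; this is why the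
degree only lives in `ℂ/πiℤ`, and why pairs whose degrees agree there are isomorphic: a sign can be
absorbed into the isomorphism `L^c ≃ L'^c`. -/

open Module

namespace Module.Basis

variable {R M ι : Type*} [CommRing R] [AddCommGroup M] [Module R M] [Unique ι]

theorem repr_default_smul (b : Basis ι R M) (v : M) : b.repr v default • b default = v := by
  simpa only [Fintype.sum_unique] using b.sum_repr v

theorem repr_default_ne_zero (b : Basis ι R M) {v : M} (hv : v ≠ 0) : b.repr v default ≠ 0 :=
  fun h => hv (by rw [← b.repr_default_smul v, h, zero_smul])

theorem exists_unit_smul_eq (b b' : Basis ι R M) : ∃ u : Rˣ, (u : R) • b default = b' default := by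
  set c := b.repr (b' default) default
  set c' := b'.repr (b default) default
  have hc : c • b default = b' default := b.repr_default_smul _
  have hc' : c' • b' default = b default := b'.repr_default_smul _
  have hcc' : c * c' = 1 := by
    have h := congrArg (fun v => b.repr v default) (show (c * c') • b default = b default by
      rw [mul_comm, mul_smul, hc, hc'])
    simpa only [map_smul, repr_self, Finsupp.smul_apply, Finsupp.single_eq_same, smul_eq_mul,
      mul_one] using h
  exact ⟨⟨c, c', hcc', by rw [mul_comm, hcc']⟩, hc⟩

end Module.Basis

theorem qlog_one : qlog 1 = 0 := by
  rw [qlog, Complex.log_one, QuotientAddGroup.mk_zero]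

theorem qlog_neg_one : qlog (-1) = ((Real.pi * Complex.I : ℂ) : CModTwoPiI) := by
  rw [qlog, Complex.log_neg_one]

theorem qlog_mul {a b : ℂ} (ha : a ≠ 0) (hb : b ≠ 0) : qlog (a * b) = qlog a + qlog b := by
  obtain ⟨n, hn⟩ := Complex.exp_eq_exp_iff_exists_int.mp (show
    Complex.exp (Complex.log (a * b)) = Complex.exp (Complex.log a + Complex.log b) by
      rw [Complex.exp_add, Complex.exp_log (mul_ne_zero ha hb), Complex.exp_log ha,
        Complex.exp_log hb])
  rw [qlog, qlog, qlog, ← QuotientAddGroup.mk_add, QuotientAddGroup.eq_iff_sub_mem, hn]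
  exact AddSubgroup.mem_zmultiples_iff.mpr ⟨n, by rw [zsmul_eq_mul]; ring⟩

theorem reduceModPiI_mk (z : ℂ) : reduceModPiI (z : CModTwoPiI) = (z : CModPiI) := rfl

theorem reduceModPiI_eq_zero_iff (x : CModTwoPiI) :
    reduceModPiI x = 0 ↔ ∃ u : ℤˣ, qlog ((u : ℤ) : ℂ) = x := by
  refine ⟨fun hx => ?_, ?_⟩
  · induction x using QuotientAddGroup.induction_on with | H z => ?_
    rw [reduceModPiI_mk, QuotientAddGroup.eq_zero_iff, piI] at hx
    obtain ⟨n, rfl⟩ := AddSubgroup.mem_zmultiples_iff.mp hx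
    obtain ⟨k, rfl | rfl⟩ := Int.even_or_odd' n
    · refine ⟨1, ?_⟩
      rw [Units.val_one, Int.cast_one, qlog_one, eq_comm, QuotientAddGroup.eq_zero_iff]
      exact AddSubgroup.mem_zmultiples_iff.mpr ⟨k, by ring⟩
    · refine ⟨-1, ?_⟩
      rw [Units.val_neg, Units.val_one, Int.cast_neg, Int.cast_one, qlog_neg_one,
        QuotientAddGroup.eq_iff_sub_mem]
      exact AddSubgroup.mem_zmultiples_iff.mpr ⟨-k, by ring⟩
  · rintro ⟨u, rfl⟩
    rcases Int.units_eq_one_or u with rfl | rfl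
    · rw [Units.val_one, Int.cast_one, qlog_one, map_zero]
    · rw [Units.val_neg, Units.val_one, Int.cast_neg, Int.cast_one, qlog_neg_one,
        reduceModPiI_mk, QuotientAddGroup.eq_zero_iff]
      exact AddSubgroup.mem_zmultiples _

namespace IsLogarithm

variable {V W : Type*} [AddCommGroup V] [Module ℂ V] [AddCommGroup W] [Module ℂ W]
  {LOG LOG' : {e : V // e ≠ 0} → CModTwoPiI}

theorem apply_of_eq_smul (hLOG : IsLogarithm LOG) {v e : {e : V // e ≠ 0}} {μ : ℂ}
    (hv : v.1 = μ • e.1) : LOG v = qlog μ + LOG e := by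
  have hμ : μ ≠ 0 := by rintro rfl; exact v.2 (by rw [hv, zero_smul])
  exact (congrArg LOG (Subtype.ext hv)).trans (hLOG (Units.mk0 μ hμ) e)

theorem comp_linearEquiv {LOG : {e : W // e ≠ 0} → CModTwoPiI} (hLOG : IsLogarithm LOG)
    (f : V ≃ₗ[ℂ] W) :
    IsLogarithm fun v : {e : V // e ≠ 0} => LOG ⟨f v, f.map_ne_zero_iff.mpr v.2⟩ :=
  fun _ _ => hLOG.apply_of_eq_smul (map_smul f _ _)

theorem ext_of_basis {ι : Type*} [Unique ι] (B : Basis ι ℂ V) (hLOG : IsLogarithm LOG)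
    (hLOG' : IsLogarithm LOG')
    (h : LOG ⟨B default, B.ne_zero _⟩ = LOG' ⟨B default, B.ne_zero _⟩) : LOG = LOG' := by
  funext v
  have hv : v.1 = B.repr v default • (⟨B default, B.ne_zero _⟩ : {e : V // e ≠ 0}).1 :=
    (B.repr_default_smul v).symm
  rw [hLOG.apply_of_eq_smul hv, hLOG'.apply_of_eq_smul hv, h]

end IsLogarithm

noncomputable def basisLog {V ι : Type*} [AddCommGroup V] [Module ℂ V] [Unique ι]
    (B : Basis ι ℂ V) (c : CModTwoPiI) (v : {e : V // e ≠ 0}) : CModTwoPiI :=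
  qlog (B.repr v default) + c

theorem isLogarithm_basisLog {V ι : Type*} [AddCommGroup V] [Module ℂ V] [Unique ι]
    (B : Basis ι ℂ V) (c : CModTwoPiI) : IsLogarithm (basisLog B c) := by
  intro l e
  rw [basisLog, basisLog, map_smul, Finsupp.smul_apply, smul_eq_mul,
    qlog_mul l.ne_zero (B.repr_default_ne_zero e.2), add_assoc]

theorem basisLog_basis {V ι : Type*} [AddCommGroup V] [Module ℂ V] [Unique ι]
    (B : Basis ι ℂ V) (c : CModTwoPiI) : basisLog B c ⟨B default, B.ne_zero _⟩ = c := by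
  rw [basisLog, B.repr_self, Finsupp.single_eq_same, qlog_one, zero_add]

section Line

variable {L L' Lc Lc' : Type} [AddCommGroup L] [AddCommGroup L'] [AddCommGroup Lc]
  [AddCommGroup Lc']

theorem one_tmul_zsmul (n : ℤ) (x : L) : (1 : ℂ) ⊗ₜ[ℤ] (n • x) = (n : ℂ) • ((1 : ℂ) ⊗ₜ[ℤ] x) := by
  rw [tmul_smul, Int.cast_smul_eq_zsmul]

noncomputable def lineBasis (b : Basis (Fin 1) ℤ L) (bc : Basis (Fin 1) ℤ Lc) :
    Basis (Fin 1) ℂ (Line L Lc) :=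
  ((Algebra.TensorProduct.basis ℂ b).tensorProduct (Algebra.TensorProduct.basis ℂ bc)).reindex
    (Equiv.prodUnique (Fin 1) (Fin 1))

noncomputable def lineVec (b : Basis (Fin 1) ℤ L) (bc : Basis (Fin 1) ℤ Lc) :
    {v : Line L Lc // v ≠ 0} :=
  ⟨lineBasis b bc default, (lineBasis b bc).ne_zero _⟩

theorem lineVec_coe (b : Basis (Fin 1) ℤ L) (bc : Basis (Fin 1) ℤ Lc) :
    (lineVec b bc : Line L Lc) = ((1 : ℂ) ⊗ₜ[ℤ] (b 0)) ⊗ₜ[ℂ] ((1 : ℂ) ⊗ₜ[ℤ] (bc 0)) := by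
  change lineBasis b bc 0 = _
  rw [lineBasis, Basis.reindex_apply, Equiv.prodUnique_symm_apply, Basis.tensorProduct_apply,
    Algebra.TensorProduct.basis_apply, Algebra.TensorProduct.basis_apply, Fin.default_eq_zero]

theorem mapLine_lineVec (φ : L ≃ₗ[ℤ] L') (ψ : Lc ≃ₗ[ℤ] Lc') (b : Basis (Fin 1) ℤ L)
    (bc : Basis (Fin 1) ℤ Lc) :
    mapLine φ ψ (lineVec b bc) = (lineVec (b.map φ) (bc.map ψ) : Line L' Lc') := by
  simp [lineVec_coe, mapLine, LinearEquiv.baseChange]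

theorem exists_lineVec_eq_iff (b : Basis (Fin 1) ℤ L) (bc : Basis (Fin 1) ℤ Lc)
    (v : {v : Line L Lc // v ≠ 0}) :
    (∃ b' bc', lineVec b' bc' = v) ↔ ∃ u : ℤˣ, v.1 = ((u : ℤ) : ℂ) • (lineVec b bc).1 := by
  constructor
  · rintro ⟨b', bc', rfl⟩
    obtain ⟨u, hu⟩ := b.exists_unit_smul_eq b'
    obtain ⟨u', hu'⟩ := bc.exists_unit_smul_eq bc'
    refine ⟨u * u', ?_⟩
    rw [Fin.default_eq_zero] at hu hu'
    rw [lineVec_coe, lineVec_coe, ← hu, ← hu', one_tmul_zsmul, one_tmul_zsmul, smul_tmul_smul,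
      Units.val_mul, Int.cast_mul]
  · rintro ⟨u, hu⟩
    refine ⟨b, bc.unitsSMul fun _ => u, Subtype.ext ?_⟩
    rw [hu, lineVec_coe, lineVec_coe, Basis.unitsSMul_apply, Units.smul_def, one_tmul_zsmul,
      tmul_smul]

end Line

namespace ConjPairZ

instance (P : ConjPairZ) : Module.Finite ℤ P.L :=
  Module.finite_of_finrank_eq_succ P.rankL

instance (P : ConjPairZ) : Module.Finite ℤ P.Lc :=
  Module.finite_of_finrank_eq_succ P.rankLc

noncomputable def basisL (P : ConjPairZ) : Basis (Fin 1) ℤ P.L :=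
  Module.finBasisOfFinrankEq ℤ P.L P.rankL

noncomputable def basisLc (P : ConjPairZ) : Basis (Fin 1) ℤ P.Lc :=
  Module.finBasisOfFinrankEq ℤ P.Lc P.rankLc

noncomputable def degSharp (P : ConjPairZ) : CModPiI :=
  -reduceModPiI (P.LOG (lineVec P.basisL P.basisLc))

theorem exists_LOG_lineVec_eq_iff (P : ConjPairZ) (b : Basis (Fin 1) ℤ P.L)
    (bc : Basis (Fin 1) ℤ P.Lc) (y : CModTwoPiI) :
    (∃ b' bc', P.LOG (lineVec b' bc') = y) ↔
      reduceModPiI (P.LOG (lineVec b bc)) = reduceModPiI y := by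
  calc (∃ b' bc', P.LOG (lineVec b' bc') = y)
      ↔ ∃ u : ℤˣ, qlog ((u : ℤ) : ℂ) + P.LOG (lineVec b bc) = y := by
        constructor
        · rintro ⟨b', bc', rfl⟩
          obtain ⟨u, hu⟩ := (exists_lineVec_eq_iff b bc _).mp ⟨b', bc', rfl⟩
          exact ⟨u, (P.isLog.apply_of_eq_smul hu).symm⟩
        · rintro ⟨u, rfl⟩
          let v : {v : Line P.L P.Lc // v ≠ 0} :=
            ⟨((u : ℤ) : ℂ) • (lineVec b bc).1, smul_ne_zero (by simp) (lineVec b bc).2⟩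
          obtain ⟨b', bc', hv⟩ := (exists_lineVec_eq_iff b bc v).mpr ⟨u, rfl⟩
          exact ⟨b', bc', hv ▸ P.isLog.apply_of_eq_smul rfl⟩
    _ ↔ reduceModPiI (y - P.LOG (lineVec b bc)) = 0 := by
        simp only [reduceModPiI_eq_zero_iff, eq_sub_iff_add_eq]
    _ ↔ _ := by rw [map_sub, sub_eq_zero, eq_comm]

theorem degSharp_eq (P : ConjPairZ) (b : Basis (Fin 1) ℤ P.L) (bc : Basis (Fin 1) ℤ P.Lc) :
    P.degSharp = -reduceModPiI (P.LOG (lineVec b bc)) := by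
  rw [degSharp, (P.exists_LOG_lineVec_eq_iff _ _ _).mp ⟨b, bc, rfl⟩]

theorem nonempty_pairIso_iff (P Q : ConjPairZ) (b : Basis (Fin 1) ℤ P.L)
    (bc : Basis (Fin 1) ℤ P.Lc) :
    Nonempty (PairIso P Q) ↔ ∃ b' bc', Q.LOG (lineVec b' bc') = P.LOG (lineVec b bc) := by
  constructor
  · rintro ⟨I⟩
    refine ⟨b.map I.φ, bc.map I.ψ, ?_⟩
    rw [← I.compat]
    exact congrArg Q.LOG (Subtype.ext (mapLine_lineVec I.φ I.ψ b bc).symm)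
  · rintro ⟨b', bc', h⟩
    let φ := b.equiv b' (Equiv.refl _)
    let ψ := bc.equiv bc' (Equiv.refl _)
    have hvec : mapLine φ ψ (lineVec b bc) = (lineVec b' bc' : Line Q.L Q.Lc) := by
      rw [mapLine_lineVec, Basis.map_equiv, Basis.map_equiv, Equiv.refl_symm, Basis.reindex_refl,
        Basis.reindex_refl]
    refine ⟨⟨φ, ψ, congrFun ((Q.isLog.comp_linearEquiv (mapLine φ ψ)).ext_of_basis
      (lineBasis b bc) P.isLog ?_)⟩⟩
    exact (congrArg Q.LOG (Subtype.ext hvec)).trans h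

theorem degSharp_eq_degSharp_iff (P Q : ConjPairZ) :
    P.degSharp = Q.degSharp ↔ Nonempty (PairIso P Q) := by
  rw [nonempty_pairIso_iff P Q P.basisL P.basisLc,
    Q.exists_LOG_lineVec_eq_iff Q.basisL Q.basisLc, degSharp, degSharp, neg_inj, eq_comm]

noncomputable def ofDegree (c : ℂ) : ConjPairZ where
  L := ℤ
  Lc := ℤ
  rankL := Module.finrank_self ℤ
  rankLc := Module.finrank_self ℤ
  LOG := basisLog (lineBasis (Basis.singleton (Fin 1) ℤ) (Basis.singleton (Fin 1) ℤ)) (-c : ℂ)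
  isLog := isLogarithm_basisLog _ _

theorem degSharp_ofDegree (c : ℂ) : (ofDegree c).degSharp = c := by
  rw [degSharp_eq _ (Basis.singleton (Fin 1) ℤ) (Basis.singleton (Fin 1) ℤ)]
  change -reduceModPiI (basisLog _ _ ⟨lineBasis _ _ default, _⟩) = _
  rw [basisLog_basis, reduceModPiI_mk, QuotientAddGroup.mk_neg, neg_neg]

end ConjPairZ

/-- The arithmetic degree `deg♯ : Pic♯(Spec ℤ) → ℂ/πiℤ`,
`deg♯(L, L^c, LOG) = − LOG(ℓ ⊗ ℓ^c) mod πiℤ` for ℤ-bases `ℓ` of `L` and `ℓ^c` of `L^c`,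
is a well-defined isomorphism: it is independent of the choice of bases, two conjugate
pairs have the same degree iff they are isomorphic (so `deg♯` is injective on the group
`Pic♯(Spec ℤ)` of isomorphism classes), and it is surjective onto `ℂ/πiℤ`. -/
theorem degSharp_isomorphism_of_PicSharp_SpecZ :
    ∃ degSharp : ConjPairZ → CModPiI,
      (∀ (P : ConjPairZ) (b : Module.Basis (Fin 1) ℤ P.L) (bc : Module.Basis (Fin 1) ℤ P.Lc)
          (v : {v : Line P.L P.Lc // v ≠ 0}),
          (v : Line P.L P.Lc) = ((1 : ℂ) ⊗ₜ[ℤ] (b 0)) ⊗ₜ[ℂ] ((1 : ℂ) ⊗ₜ[ℤ] (bc 0)) →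
          degSharp P = - reduceModPiI (P.LOG v)) ∧
      (∀ P Q : ConjPairZ, degSharp P = degSharp Q ↔ Nonempty (PairIso P Q)) ∧
      Function.Surjective degSharp := by
  refine ⟨ConjPairZ.degSharp, fun P b bc v hv => ?_, ConjPairZ.degSharp_eq_degSharp_iff,
    fun c => ?_⟩
  · obtain rfl : v = lineVec b bc := Subtype.ext (hv.trans (lineVec_coe b bc).symm)
    exact P.degSharp_eq b bc
  · obtain ⟨c, rfl⟩ := QuotientAddGroup.mk_surjective c
    exact ⟨ConjPairZ.ofDegree c, ConjPairZ.degSharp_ofDegree c⟩
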